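/- Let A ∈ ℝ^{n×N} have full row rank, let x ∈ ℝ^N and e ∈ ℝ^n with b = Ax + e, let x^♯ be a best s-term approximation of x, and set ẽ = (AA*)^{-1/2}( A(x − x^♯) + e ). Let γ be a (3s)-th order P-RIP constant for A. Suppose u' is s-sparse, x'' = u' + A*(AA*)^{-1}(b − A u'), and u'' is a best s-term approximation of x''. Then ‖u'' − x^♯‖₂ ≤ 2γ ‖u' − x^♯‖₂ + 2 ‖ẽ‖₂. -/

import Mathlib

open Matrix Finset Filter Topology

/-- Euclidean norm of a vector. -/
noncomputable def euclNorm {k : ℕ} (x : Fin k → ℝ) : ℝ := Real.sqrt (∑ i, x i ^ 2)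

/-- `x` has at most `s` nonzero entries. -/
def IsSparse {k : ℕ} (s : ℕ) (x : Fin k → ℝ) : Prop :=
  (Finset.univ.filter fun i => x i ≠ 0).card ≤ s

/-- Spectral norm (ℓ²-operator norm) of a matrix. -/
noncomputable def specNorm {m k : Type*} [Fintype m] [Fintype k] [DecidableEq k]
    (M : Matrix m k ℝ) : ℝ :=
  ‖LinearMap.toContinuousLinearMap (Matrix.toEuclideanLin M)‖

/-- `cols A T` is the submatrix of `A` consisting of the columns indexed by `T`. -/
def cols {n N : ℕ} (A : Matrix (Fin n) (Fin N) ℝ) (T : Finset (Fin N)) :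
    Matrix (Fin n) {i : Fin N // i ∈ T} ℝ := Matrix.of fun r c => A r c.1

/-- `subv x T` is the subvector of `x` consisting of the entries indexed by `T`. -/
def subv {N : ℕ} (x : Fin N → ℝ) (T : Finset (Fin N)) : {i : Fin N // i ∈ T} → ℝ :=
  fun i => x i.1

/-- The feedback term `(A_T* A_T)⁻¹ A_T* A_{Tᶜ} x_{Tᶜ}`. -/
noncomputable def fb {n N : ℕ} (A : Matrix (Fin n) (Fin N) ℝ) (T : Finset (Fin N))
    (x : Fin N → ℝ) : {i : Fin N // i ∈ T} → ℝ :=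
  ((cols A T)ᵀ * cols A T)⁻¹ *ᵥ ((cols A T)ᵀ *ᵥ (cols A Tᶜ *ᵥ subv x Tᶜ))

/-- The old Mathlib `Matrix.PosSemidef.sqrt` (removed since), with its old definition. -/
noncomputable def Matrix.PosSemidef.sqrt {m : Type*} [Fintype m]
    [DecidableEq m] {M : Matrix m m ℝ} (hM : M.PosSemidef) : Matrix m m ℝ :=
  hM.1.eigenvectorUnitary.1 * diagonal ((↑) ∘ Real.sqrt ∘ hM.1.eigenvalues) *
  (star hM.1.eigenvectorUnitary : Matrix m m ℝ)

/-!
With `S = (AA*)^{1/2}` and `B = S⁻¹A` one has `BB* = 1`, so `B` is a contraction, and the step reads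
`x'' - x^♯ = (B*B - 1)(x^♯ - u') + B*ẽ`. Hard thresholding loses at most a factor `2` against the
restriction of `x'' - x^♯` to `T = supp u'' ∪ supp x^♯`. On `T` the noise term has norm at most
`‖ẽ‖`, and the restricted residual `w = ((B*B - 1)v)_T` satisfies `‖w‖² = ⟨Bw, Bv⟩ - ⟨w, v⟩`,
which is at most `γ‖w‖‖v‖` by the Cauchy–Schwarz inequality for the nonnegative defect form
`‖z‖² - ‖Bz‖²` together with the P-RIP bound on the sparse vectors `w` and `v`.
-/

noncomputable def vecSupport {k : ℕ} (z : Fin k → ℝ) : Finset (Fin k) :=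
  univ.filter fun i => z i ≠ 0

section Sparsity

variable {k : ℕ}

lemma apply_eq_zero_of_notMem_vecSupport {z : Fin k → ℝ} {i : Fin k} (hi : i ∉ vecSupport z) :
    z i = 0 := by
  simpa [vecSupport] using hi

lemma IsSparse.mono {s t : ℕ} {z : Fin k → ℝ} (hst : s ≤ t) (hz : IsSparse s z) : IsSparse t z :=
  le_trans hz hst

lemma IsSparse.sub {s t : ℕ} {y z : Fin k → ℝ} (hy : IsSparse s y) (hz : IsSparse t z) :
    IsSparse (s + t) (y - z) := by
  have hsub : vecSupport (y - z) ⊆ vecSupport y ∪ vecSupport z := by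
    intro i hi
    by_contra h
    simp only [mem_union, not_or] at h
    simp [vecSupport, apply_eq_zero_of_notMem_vecSupport h.1,
      apply_eq_zero_of_notMem_vecSupport h.2] at hi
  exact (card_le_card hsub).trans ((card_union_le _ _).trans (add_le_add hy hz))

lemma vecSupport_indicator_subset (T : Finset (Fin k)) (z : Fin k → ℝ) :
    vecSupport ((T : Set (Fin k)).indicator z) ⊆ T := by
  intro i hi
  by_contra h
  simp [vecSupport, h] at hi

end Sparsity

section EuclNorm

variable {k : ℕ}

lemma euclNorm_eq_norm (z : Fin k → ℝ) : euclNorm z = ‖WithLp.toLp 2 z‖ := by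
  simp [euclNorm, EuclideanSpace.norm_eq]

lemma euclNorm_nonneg (z : Fin k → ℝ) : 0 ≤ euclNorm z := Real.sqrt_nonneg _

lemma euclNorm_sq (z : Fin k → ℝ) : euclNorm z ^ 2 = z ⬝ᵥ z := by
  rw [euclNorm, Real.sq_sqrt (by positivity)]
  simp [dotProduct, sq]

lemma euclNorm_le_euclNorm_iff {y z : Fin k → ℝ} :
    euclNorm y ≤ euclNorm z ↔ ∑ i, y i ^ 2 ≤ ∑ i, z i ^ 2 :=
  Real.sqrt_le_sqrt_iff (by positivity)

lemma euclNorm_add_le (y z : Fin k → ℝ) : euclNorm (y + z) ≤ euclNorm y + euclNorm z := by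
  simpa [euclNorm_eq_norm] using norm_add_le (WithLp.toLp 2 y) (WithLp.toLp 2 z)

lemma euclNorm_sub_le (y z : Fin k → ℝ) : euclNorm (y - z) ≤ euclNorm y + euclNorm z := by
  simpa [euclNorm_eq_norm] using norm_sub_le (WithLp.toLp 2 y) (WithLp.toLp 2 z)

lemma euclNorm_sub_comm (y z : Fin k → ℝ) : euclNorm (y - z) = euclNorm (z - y) := by
  simpa [euclNorm_eq_norm] using norm_sub_rev (WithLp.toLp 2 y) (WithLp.toLp 2 z)

lemma dotProduct_le_euclNorm_mul (y z : Fin k → ℝ) : y ⬝ᵥ z ≤ euclNorm y * euclNorm z := by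
  simpa [EuclideanSpace.inner_eq_star_dotProduct, euclNorm_eq_norm, mul_comm] using
    real_inner_le_norm (WithLp.toLp 2 z) (WithLp.toLp 2 y)

lemma euclNorm_indicator_le (T : Finset (Fin k)) (z : Fin k → ℝ) :
    euclNorm ((T : Set (Fin k)).indicator z) ≤ euclNorm z := by
  refine euclNorm_le_euclNorm_iff.2 (sum_le_sum fun i _ => ?_)
  by_cases hi : i ∈ T <;> simp [hi, sq_nonneg]

lemma indicator_dotProduct_self (T : Finset (Fin k)) (z : Fin k → ℝ) :
    (T : Set (Fin k)).indicator z ⬝ᵥ z =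
      (T : Set (Fin k)).indicator z ⬝ᵥ (T : Set (Fin k)).indicator z := by
  refine sum_congr rfl fun i _ => ?_
  by_cases hi : i ∈ T <;> simp [hi]

end EuclNorm

section HardThresholding

variable {k s : ℕ} {y u xs : Fin k → ℝ}

lemma euclNorm_indicator_sub_le_of_isBest
    (hu : ∀ z : Fin k → ℝ, IsSparse s z → euclNorm (u - y) ≤ euclNorm (z - y))
    (hxs : IsSparse s xs) {T : Finset (Fin k)} (huT : vecSupport u ⊆ T) (hxT : vecSupport xs ⊆ T) :
    euclNorm ((T : Set (Fin k)).indicator (y - u)) ≤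
      euclNorm ((T : Set (Fin k)).indicator (y - xs)) := by
  have hoff : ∀ i ∈ Tᶜ, (y i - u i) ^ 2 = (y i - xs i) ^ 2 := fun i hi => by
    have hiT := mem_compl.1 hi
    rw [apply_eq_zero_of_notMem_vecSupport fun h => hiT (huT h),
      apply_eq_zero_of_notMem_vecSupport fun h => hiT (hxT h)]
  have hbest := hu xs hxs
  rw [euclNorm_sub_comm u, euclNorm_sub_comm xs, euclNorm_le_euclNorm_iff] at hbest
  simp only [Pi.sub_apply, ← sum_add_sum_compl T fun i => (y i - _) ^ 2, sum_congr rfl hoff,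
    add_le_add_iff_right] at hbest
  rw [euclNorm_le_euclNorm_iff]
  simpa [Set.indicator_apply, ite_pow, sum_ite_mem] using hbest

lemma euclNorm_sub_le_two_mul_indicator_of_isBest
    (hu : ∀ z : Fin k → ℝ, IsSparse s z → euclNorm (u - y) ≤ euclNorm (z - y))
    (hxs : IsSparse s xs) :
    euclNorm (u - xs) ≤
      2 * euclNorm (((vecSupport u ∪ vecSupport xs : Finset (Fin k)) : Set (Fin k)).indicator
        (y - xs)) := by
  set T : Set (Fin k) := ↑(vecSupport u ∪ vecSupport xs)
  have hsplit : u - xs = T.indicator (y - xs) - T.indicator (y - u) := by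
    funext i
    by_cases hi : i ∈ T
    · simp [hi]
    · have hi' : i ∉ vecSupport u ∧ i ∉ vecSupport xs := by simpa [T] using hi
      simp [hi, apply_eq_zero_of_notMem_vecSupport hi'.1, apply_eq_zero_of_notMem_vecSupport hi'.2]
  calc euclNorm (u - xs)
      ≤ euclNorm (T.indicator (y - xs)) + euclNorm (T.indicator (y - u)) :=
        hsplit ▸ euclNorm_sub_le _ _
    _ ≤ 2 * euclNorm (T.indicator (y - xs)) := by
      linarith [euclNorm_indicator_sub_le_of_isBest hu hxs subset_union_left subset_union_right]

end HardThresholding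

section Contraction

variable {m k : ℕ} {B : Matrix (Fin m) (Fin k) ℝ}

lemma euclNorm_transpose_mulVec (hB : B * Bᵀ = 1) (y : Fin m → ℝ) :
    euclNorm (Bᵀ *ᵥ y) = euclNorm y := by
  rw [← sq_eq_sq₀ (euclNorm_nonneg _) (euclNorm_nonneg _), euclNorm_sq, euclNorm_sq,
    dotProduct_mulVec, vecMul_transpose, mulVec_mulVec, hB, one_mulVec]

lemma euclNorm_mulVec_le (hB : B * Bᵀ = 1) (z : Fin k → ℝ) : euclNorm (B *ᵥ z) ≤ euclNorm z := by
  have h : euclNorm (B *ᵥ z) ^ 2 ≤ euclNorm (B *ᵥ z) * euclNorm z :=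
    calc euclNorm (B *ᵥ z) ^ 2 = Bᵀ *ᵥ (B *ᵥ z) ⬝ᵥ z := by
          rw [euclNorm_sq, dotProduct_comm _ z, dotProduct_mulVec z Bᵀ, vecMul_transpose]
      _ ≤ euclNorm (Bᵀ *ᵥ (B *ᵥ z)) * euclNorm z := dotProduct_le_euclNorm_mul _ _
      _ = euclNorm (B *ᵥ z) * euclNorm z := by rw [euclNorm_transpose_mulVec hB]
  nlinarith [euclNorm_nonneg (B *ᵥ z), euclNorm_nonneg z]

/-- Cauchy–Schwarz for the nonnegative defect form `⟨w, v⟩ - ⟨Bw, Bv⟩` of a contraction. -/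
lemma sq_dotProduct_sub_le_of_contraction (hB : ∀ z, euclNorm (B *ᵥ z) ≤ euclNorm z)
    (w v : Fin k → ℝ) :
    (w ⬝ᵥ v - B *ᵥ w ⬝ᵥ B *ᵥ v) ^ 2 ≤
      (euclNorm w ^ 2 - euclNorm (B *ᵥ w) ^ 2) * (euclNorm v ^ 2 - euclNorm (B *ᵥ v) ^ 2) := by
  have hq : ∀ t : ℝ, 0 ≤ (euclNorm v ^ 2 - euclNorm (B *ᵥ v) ^ 2) * (t * t) +
      2 * (w ⬝ᵥ v - B *ᵥ w ⬝ᵥ B *ᵥ v) * t + (euclNorm w ^ 2 - euclNorm (B *ᵥ w) ^ 2) := by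
    intro t
    have h := pow_le_pow_left₀ (euclNorm_nonneg _) (hB (w + t • v)) 2
    simp only [euclNorm_sq, mulVec_add, mulVec_smul, dotProduct_add, add_dotProduct,
      dotProduct_smul, smul_dotProduct, smul_eq_mul, dotProduct_comm v w,
      dotProduct_comm (B *ᵥ v) (B *ᵥ w)] at h ⊢
    linarith
  have hdiscrim := discrim_le_zero hq
  rw [discrim] at hdiscrim
  linarith

lemma euclNorm_indicator_gram_sub_le {s : ℕ} {γ : ℝ} (hγ : 0 ≤ γ) (hB : B * Bᵀ = 1)
    (hRIP : ∀ z : Fin k → ℝ, IsSparse s z → (1 - γ) * euclNorm z ^ 2 ≤ euclNorm (B *ᵥ z) ^ 2)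
    {T : Finset (Fin k)} (hT : T.card ≤ s) {v : Fin k → ℝ} (hv : IsSparse s v) :
    euclNorm ((T : Set (Fin k)).indicator (Bᵀ *ᵥ (B *ᵥ v) - v)) ≤ γ * euclNorm v := by
  set w := (T : Set (Fin k)).indicator (Bᵀ *ᵥ (B *ᵥ v) - v)
  have hw : IsSparse s w := (card_le_card (vecSupport_indicator_subset T _)).trans hT
  have hww : euclNorm w ^ 2 = B *ᵥ w ⬝ᵥ B *ᵥ v - w ⬝ᵥ v := by
    rw [euclNorm_sq, ← indicator_dotProduct_self, dotProduct_sub, dotProduct_mulVec,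
      vecMul_transpose]
  have hdefect := sq_dotProduct_sub_le_of_contraction (euclNorm_mulVec_le hB) w v
  have hsq : (B *ᵥ w ⬝ᵥ B *ᵥ v - w ⬝ᵥ v) ^ 2 ≤ (γ * euclNorm w * euclNorm v) ^ 2 :=
    calc (B *ᵥ w ⬝ᵥ B *ᵥ v - w ⬝ᵥ v) ^ 2 = (w ⬝ᵥ v - B *ᵥ w ⬝ᵥ B *ᵥ v) ^ 2 := by ring
      _ ≤ (euclNorm w ^ 2 - euclNorm (B *ᵥ w) ^ 2) * (euclNorm v ^ 2 - euclNorm (B *ᵥ v) ^ 2) :=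
        hdefect
      _ ≤ (γ * euclNorm w ^ 2) * (γ * euclNorm v ^ 2) := by
        have hwB := pow_le_pow_left₀ (euclNorm_nonneg _) (euclNorm_mulVec_le hB w) 2
        gcongr
        · nlinarith [euclNorm_mulVec_le hB v, euclNorm_nonneg (B *ᵥ v)]
        · linarith [hRIP w hw]
        · linarith [hRIP v hv]
      _ = (γ * euclNorm w * euclNorm v) ^ 2 := by ring
  have hγv : 0 ≤ γ * euclNorm v := mul_nonneg hγ (euclNorm_nonneg v)
  have hle := (abs_le_of_sq_le_sq' hsq (by nlinarith [euclNorm_nonneg w])).2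
  rw [← hww] at hle
  nlinarith [euclNorm_nonneg w]

end Contraction

lemma Matrix.PosSemidef.sqrt_mul_self {m : Type*} [Fintype m] [DecidableEq m]
    {M : Matrix m m ℝ} (hM : M.PosSemidef) : hM.sqrt * hM.sqrt = M := by
  have hU := Matrix.UnitaryGroup.star_mul_self hM.1.eigenvectorUnitary
  have hD : diagonal ((↑) ∘ Real.sqrt ∘ hM.1.eigenvalues : m → ℝ) *
      diagonal ((↑) ∘ Real.sqrt ∘ hM.1.eigenvalues : m → ℝ) =
        diagonal (RCLike.ofReal ∘ hM.1.eigenvalues : m → ℝ) := by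
    rw [diagonal_mul_diagonal]
    congr 1
    funext i
    simp [Real.mul_self_sqrt (hM.eigenvalues_nonneg i)]
  conv_rhs => rw [hM.1.spectral_theorem, Unitary.conjStarAlgAut_apply]
  simp only [Matrix.PosSemidef.sqrt, Matrix.mul_assoc]
  rw [← Matrix.mul_assoc (star _) _ (_ * _), hU, Matrix.one_mul,
    ← Matrix.mul_assoc (diagonal _), hD]

lemma Matrix.PosSemidef.transpose_sqrt {m : Type*} [Fintype m] [DecidableEq m]
    {M : Matrix m m ℝ} (hM : M.PosSemidef) : hM.sqrtᵀ = hM.sqrt := by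
  rw [Matrix.PosSemidef.sqrt, transpose_mul, transpose_mul, diagonal_transpose,
    ← conjTranspose_eq_transpose_of_trivial, ← conjTranspose_eq_transpose_of_trivial,
    star_eq_conjTranspose, conjTranspose_conjTranspose, Matrix.mul_assoc]

section Preconditioning

variable {m k : Type*} [Fintype m] [DecidableEq m] [Fintype k] {R : Type*} [CommRing R]
  {A : Matrix m k R} {S : Matrix m m R}

lemma inv_mul_mul_transpose_inv_mul (hSt : Sᵀ = S) (hS : IsUnit S) (hSS : S * S = A * Aᵀ) :
    S⁻¹ * A * (S⁻¹ * A)ᵀ = 1 := by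
  have hdet := (isUnit_iff_isUnit_det S).1 hS
  rw [transpose_mul, transpose_nonsing_inv, hSt, Matrix.mul_assoc, ← Matrix.mul_assoc A, ← hSS,
    Matrix.mul_assoc S, mul_nonsing_inv S hdet, Matrix.mul_one, nonsing_inv_mul S hdet]

lemma add_transpose_mulVec_inv_sub_eq (hSt : Sᵀ = S) (hSS : S * S = A * Aᵀ)
    (x u xs : k → R) (e : m → R) :
    u + Aᵀ *ᵥ ((A * Aᵀ)⁻¹ *ᵥ (A *ᵥ x + e - A *ᵥ u)) - xs =
      (S⁻¹ * A)ᵀ *ᵥ ((S⁻¹ * A) *ᵥ (xs - u)) - (xs - u) +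
        (S⁻¹ * A)ᵀ *ᵥ (S⁻¹ *ᵥ (A *ᵥ (x - xs) + e)) := by
  have hinv : (A * Aᵀ)⁻¹ = S⁻¹ * S⁻¹ := by rw [← hSS, Matrix.mul_inv_rev]
  rw [hinv, transpose_mul, transpose_nonsing_inv, hSt]
  simp only [← mulVec_mulVec, mulVec_add, mulVec_sub]
  abel

end Preconditioning

theorem stmt_16_general {n N s : ℕ} (A : Matrix (Fin n) (Fin N) ℝ)
    (hpd : (A * Aᵀ).PosDef)
    (x : Fin N → ℝ) (e b : Fin n → ℝ) (hb : b = A *ᵥ x + e)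
    (xs : Fin N → ℝ) (hxs : IsSparse s xs)
    (et : Fin n → ℝ) (het : et = (hpd.posSemidef.sqrt)⁻¹ *ᵥ (A *ᵥ (x - xs) + e))
    (γ : ℝ) (hγ0 : 0 ≤ γ)
    (hPRIP : ∀ z : Fin N → ℝ, IsSparse (3*s) z →
      (1 - γ) * euclNorm z ^ 2 ≤ euclNorm ((hpd.posSemidef.sqrt)⁻¹ *ᵥ (A *ᵥ z)) ^ 2)
    (u' x'' u'' : Fin N → ℝ) (hu' : IsSparse s u')
    (hx'' : x'' = u' + Aᵀ *ᵥ ((A * Aᵀ)⁻¹ *ᵥ (b - A *ᵥ u')))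
    (hu''s : IsSparse s u'')
    (hu''b : ∀ z : Fin N → ℝ, IsSparse s z → euclNorm (u'' - x'') ≤ euclNorm (z - x'')) :
    euclNorm (u'' - xs) ≤ 2 * γ * euclNorm (u' - xs) + 2 * euclNorm et := by
  set S := hpd.posSemidef.sqrt
  have hSS : S * S = A * Aᵀ := hpd.posSemidef.sqrt_mul_self
  have hSt : Sᵀ = S := hpd.posSemidef.transpose_sqrt
  have hS : IsUnit S := isUnit_of_mul_isUnit_left (hSS ▸ hpd.isUnit)
  set B := S⁻¹ * A
  have hB : B * Bᵀ = 1 := inv_mul_mul_transpose_inv_mul hSt hS hSS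
  have hRIP : ∀ z : Fin N → ℝ, IsSparse (s + s) z →
      (1 - γ) * euclNorm z ^ 2 ≤ euclNorm (B *ᵥ z) ^ 2 := fun z hz => by
    simpa only [B, ← mulVec_mulVec] using hPRIP z (hz.mono (by omega))
  have hstep : x'' - xs = Bᵀ *ᵥ (B *ᵥ (xs - u')) - (xs - u') + Bᵀ *ᵥ et := by
    rw [hx'', hb, het]
    exact add_transpose_mulVec_inv_sub_eq hSt hSS x u' xs e
  set T : Set (Fin N) := ↑(vecSupport u'' ∪ vecSupport xs)
  calc euclNorm (u'' - xs) ≤ 2 * euclNorm (T.indicator (x'' - xs)) :=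
        euclNorm_sub_le_two_mul_indicator_of_isBest hu''b hxs
    _ ≤ 2 * (euclNorm (T.indicator (Bᵀ *ᵥ (B *ᵥ (xs - u')) - (xs - u'))) +
          euclNorm (T.indicator (Bᵀ *ᵥ et))) := by
      rw [hstep, Set.indicator_add']
      gcongr
      exact euclNorm_add_le _ _
    _ ≤ 2 * (γ * euclNorm (xs - u') + euclNorm et) := by
      gcongr
      · exact euclNorm_indicator_gram_sub_le hγ0 hB hRIP
          ((card_union_le _ _).trans (add_le_add hu''s hxs)) (hxs.sub hu')
      · exact (euclNorm_indicator_le _ _).trans (euclNorm_transpose_mulVec hB et).le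
    _ = 2 * γ * euclNorm (u' - xs) + 2 * euclNorm et := by
      rw [euclNorm_sub_comm]
      ring

/-- one-step error reduction for NST+HT. -/
theorem stmt_16 {n N s : ℕ} (hnN : n < N) (A : Matrix (Fin n) (Fin N) ℝ)
    (hpd : (A * Aᵀ).PosDef)
    (x : Fin N → ℝ) (e b : Fin n → ℝ) (hb : b = A *ᵥ x + e)
    (xs : Fin N → ℝ) (hxs : IsSparse s xs)
    (hbest : ∀ z : Fin N → ℝ, IsSparse s z → euclNorm (xs - x) ≤ euclNorm (z - x))
    (et : Fin n → ℝ) (het : et = (hpd.posSemidef.sqrt)⁻¹ *ᵥ (A *ᵥ (x - xs) + e))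
    (γ : ℝ) (hγ0 : 0 ≤ γ)
    (hPRIP : ∀ z : Fin N → ℝ, IsSparse (3*s) z →
      (1 - γ) * euclNorm z ^ 2 ≤ euclNorm ((hpd.posSemidef.sqrt)⁻¹ *ᵥ (A *ᵥ z)) ^ 2)
    (u' x'' u'' : Fin N → ℝ) (hu' : IsSparse s u')
    (hx'' : x'' = u' + Aᵀ *ᵥ ((A * Aᵀ)⁻¹ *ᵥ (b - A *ᵥ u')))
    (hu''s : IsSparse s u'')
    (hu''b : ∀ z : Fin N → ℝ, IsSparse s z → euclNorm (u'' - x'') ≤ euclNorm (z - x'')) :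
    euclNorm (u'' - xs) ≤ 2 * γ * euclNorm (u' - xs) + 2 * euclNorm et :=
  stmt_16_general A hpd x e b hb xs hxs et het γ hγ0 hPRIP u' x'' u'' hu' hx'' hu''s hu''b
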